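/- Let a, b ∈ ℝ with b ≠ 0, and let p : ℝ → ℝ be continuous on [0,1]. There is no function w : ℝ → ℝ, four times continuously differentiable on [0,1], with ∫₀¹ w(x)² dx > 0, satisfying the clamped boundary conditions w(0) = w(1) = 0 and w'(0) = w'(1) = 0, such that for all x ∈ [0,1] both a·w⁗(x) − b·(2·κ(w)·w''(x) − κ(w)²·w(x)) = p(x) and (a − b)·w⁗(x) = p(x) hold, where κ(w) = (∫₀¹ w·w'')/(∫₀¹ w²). -/

import Mathlib

/-!
Subtracting the two equations and dividing by `b` leaves the constant-coefficient equation
`w⁗ - 2κ w'' + κ² w = 0`, i.e. `(d² - κ)² w = 0`. For a clamped `w`, two integrations by parts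
give `∫ w''² = ∫ w w⁗`, hence `∫ (w'' - κ w)² = ∫ w (w⁗ - 2κ w'' + κ² w) = 0` and `w'' = κ w`.
Since `w(0) = w'(0) = 0`, Grönwall's inequality for the pair `(w, w')` forces `w = 0` on `[0,1]`,
contradicting `∫ w² > 0`. Only the constancy of `κ` matters, not its value.
-/

/-- `D n w` is the `n`-th derivative of `w` on the interval `[0,1]`. -/
noncomputable def D (n : ℕ) (w : ℝ → ℝ) : ℝ → ℝ :=
  iteratedDerivWithin n w (Set.Icc (0 : ℝ) 1)

/-- The Rayleigh-type quotient `κ(w) = (∫₀¹ w w'') / (∫₀¹ w²)`. -/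
noncomputable def kappa (w : ℝ → ℝ) : ℝ :=
  (∫ x in (0:ℝ)..1, w x * D 2 w x) / (∫ x in (0:ℝ)..1, (w x) ^ 2)

open Set intervalIntegral

theorem eqOn_zero_of_integral_sq_eq_zero {f : ℝ → ℝ} {a b : ℝ} (hab : a < b)
    (hf : ContinuousOn f (Icc a b)) (h : ∫ x in a..b, f x ^ 2 = 0) : EqOn f 0 (Icc a b) := by
  intro x hx
  by_contra hfx
  refine (integral_pos hab (hf.pow 2) (fun y _ ↦ sq_nonneg (f y)) ⟨x, hx, ?_⟩).ne' h
  exact sq_pos_of_ne_zero hfx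

section IteratedDerivOnUnitInterval

variable {w : ℝ → ℝ} {n : ℕ}

theorem D_zero (w : ℝ → ℝ) : D 0 w = w := iteratedDerivWithin_zero

theorem continuousOn_D (hw : ContDiffOn ℝ n w (Icc 0 1)) {k : ℕ} (hk : k ≤ n) :
    ContinuousOn (D k w) (Icc 0 1) :=
  hw.continuousOn_iteratedDerivWithin (by exact_mod_cast hk) (uniqueDiffOn_Icc zero_lt_one)

theorem hasDerivWithinAt_D (hw : ContDiffOn ℝ n w (Icc 0 1)) {k : ℕ} (hk : k < n) {x : ℝ}
    (hx : x ∈ Icc (0 : ℝ) 1) : HasDerivWithinAt (D k w) (D (k + 1) w x) (Icc 0 1) x := by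
  unfold D
  rw [iteratedDerivWithin_succ]
  exact (hw.differentiableOn_iteratedDerivWithin (by exact_mod_cast hk)
    (uniqueDiffOn_Icc zero_lt_one) x hx).hasDerivWithinAt

theorem integral_D_mul_D_succ {j k : ℕ} (hw : ContDiffOn ℝ n w (Icc 0 1)) (hj : j < n)
    (hk : k < n) (h₀ : D j w 0 = 0) (h₁ : D j w 1 = 0) :
    ∫ x in (0 : ℝ)..1, D j w x * D (k + 1) w x = -∫ x in (0 : ℝ)..1, D (j + 1) w x * D k w x := by
  rw [integral_mul_deriv_eq_deriv_mul_of_hasDerivWithinAt (u := D j w) (v := D k w)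
    (u' := D (j + 1) w) (v' := D (k + 1) w), h₀, h₁]
  · ring
  · rw [uIcc_of_le zero_le_one]
    exact fun x hx ↦ hasDerivWithinAt_D hw hj hx
  · rw [uIcc_of_le zero_le_one]
    exact fun x hx ↦ hasDerivWithinAt_D hw hk hx
  · exact (continuousOn_D hw hj).intervalIntegrable_of_Icc zero_le_one
  · exact (continuousOn_D hw hk).intervalIntegrable_of_Icc zero_le_one

theorem integral_D_two_sq_eq_integral_mul_D_four (hw : ContDiffOn ℝ 4 w (Icc 0 1))
    (hw₀ : w 0 = 0) (hw₁ : w 1 = 0) (hw'₀ : D 1 w 0 = 0) (hw'₁ : D 1 w 1 = 0) :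
    ∫ x in (0 : ℝ)..1, D 2 w x ^ 2 = ∫ x in (0 : ℝ)..1, w x * D 4 w x := by
  have h₁ := integral_D_mul_D_succ (n := 4) (j := 1) (k := 2) hw (by norm_num) (by norm_num)
    hw'₀ hw'₁
  have h₀ := integral_D_mul_D_succ (n := 4) (j := 0) (k := 3) hw (by norm_num) (by norm_num)
    (by rwa [D_zero]) (by rwa [D_zero])
  simp only [D_zero, sq, Nat.reduceAdd] at h₀ h₁ ⊢
  rw [h₀, h₁, neg_neg]

theorem D_two_eq_mul_of_D_four_eq (hw : ContDiffOn ℝ 4 w (Icc 0 1))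
    (hw₀ : w 0 = 0) (hw₁ : w 1 = 0) (hw'₀ : D 1 w 0 = 0) (hw'₁ : D 1 w 1 = 0) {c : ℝ}
    (hode : ∀ x ∈ Icc (0 : ℝ) 1, D 4 w x = 2 * c * D 2 w x - c ^ 2 * w x) :
    ∀ x ∈ Icc (0 : ℝ) 1, D 2 w x = c * w x := by
  have hw₂ := continuousOn_D (n := 4) hw (k := 2) (by norm_num)
  have hwc : ContinuousOn w (Icc 0 1) := hw.continuousOn
  have hsq : ∫ x in (0 : ℝ)..1, (D 2 w x - c * w x) ^ 2 = 0 := by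
    have hpt : EqOn (fun x ↦ (D 2 w x - c * w x) ^ 2) (fun x ↦ D 2 w x ^ 2 - w x * D 4 w x)
        (uIcc 0 1) := by
      intro x hx
      rw [uIcc_of_le zero_le_one] at hx
      simp only [hode x hx]
      ring
    rw [integral_congr hpt, integral_sub,
      integral_D_two_sq_eq_integral_mul_D_four hw hw₀ hw₁ hw'₀ hw'₁, sub_self]
    · exact (hw₂.pow 2).intervalIntegrable_of_Icc zero_le_one
    · exact (hwc.mul (continuousOn_D hw le_rfl)).intervalIntegrable_of_Icc zero_le_one
  intro x hx
  exact sub_eq_zero.mp (eqOn_zero_of_integral_sq_eq_zero zero_lt_one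
    (hw₂.sub (continuousOn_const.mul hwc)) hsq hx)

theorem eqOn_zero_of_D_two_eq_mul (hw : ContDiffOn ℝ 2 w (Icc 0 1)) {c : ℝ}
    (hode : ∀ x ∈ Icc (0 : ℝ) 1, D 2 w x = c * w x) (hw₀ : w 0 = 0) (hw'₀ : D 1 w 0 = 0) :
    EqOn w 0 (Icc 0 1) := by
  have hvec := eq_zero_of_abs_deriv_le_mul_abs_self_of_eq_zero_right
    (f := fun x ↦ (w x, D 1 w x)) (f' := fun x ↦ (D 1 w x, c * w x)) (K := 1 + |c|)
    (hw.continuousOn.prodMk (continuousOn_D hw (by norm_num))) ?_ (by simp [hw₀, hw'₀]) ?_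
  · exact fun x hx ↦ congrArg Prod.fst (hvec x hx)
  · intro x hx
    have hx' := Ico_subset_Icc_self hx
    have h₀ := hasDerivWithinAt_D (n := 2) (k := 0) hw (by norm_num) hx'
    have h₁ := hasDerivWithinAt_D (n := 2) (k := 1) hw (by norm_num) hx'
    rw [D_zero] at h₀
    rw [hode x hx'] at h₁
    exact (h₀.prodMk h₁).mono_of_mem_nhdsWithin (Icc_mem_nhdsGE_of_mem hx)
  · intro x _
    simp only [Prod.norm_def, Real.norm_eq_abs, abs_mul]
    have hw_le := le_max_left |w x| |D 1 w x|
    have hw'_le := le_max_right |w x| |D 1 w x|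
    have hm := (abs_nonneg (w x)).trans hw_le
    have hc := abs_nonneg c
    exact max_le (by nlinarith) (by nlinarith)

end IteratedDerivOnUnitInterval

theorem no_clamped_laminated_solution_of_both_equations_general
    (a b : ℝ) (hb : b ≠ 0)
    (p : ℝ → ℝ) :
    ¬ ∃ w : ℝ → ℝ, ContDiffOn ℝ 4 w (Set.Icc (0 : ℝ) 1) ∧
        (0 < ∫ x in (0:ℝ)..1, (w x) ^ 2) ∧
        w 0 = 0 ∧ w 1 = 0 ∧ D 1 w 0 = 0 ∧ D 1 w 1 = 0 ∧
        (∀ x ∈ Set.Icc (0 : ℝ) 1,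
          a * D 4 w x - b * (2 * kappa w * D 2 w x - (kappa w) ^ 2 * w x) = p x) ∧
        (∀ x ∈ Set.Icc (0 : ℝ) 1, (a - b) * D 4 w x = p x) := by
  rintro ⟨w, hw, hpos, hw₀, hw₁, hw'₀, hw'₁, hPGD, hCLPT⟩
  have hode : ∀ x ∈ Icc (0 : ℝ) 1,
      D 4 w x = 2 * kappa w * D 2 w x - kappa w ^ 2 * w x := fun x hx ↦
    mul_left_cancel₀ hb (by linear_combination hPGD x hx - hCLPT x hx)
  have hD₂ := D_two_eq_mul_of_D_four_eq hw hw₀ hw₁ hw'₀ hw'₁ hode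
  have hzero := eqOn_zero_of_D_two_eq_mul (hw.of_le (by norm_num)) hD₂ hw₀ hw'₀
  refine hpos.ne' ?_
  rw [integral_congr (g := fun _ ↦ 0) fun x hx ↦ ?_, integral_zero]
  rw [uIcc_of_le zero_le_one] at hx
  simp [hzero hx]

/-- Laminated-strip incompatibility: for a Poisson-coupling coefficient `b ≠ 0`,
no clamped strip deflection can solve simultaneously the PGD limit strip equation
`a w⁗ − b (2κ(w) w'' − κ(w)² w) = p` and the Classical Laminated Plate Theory strip
equation `(a − b) w⁗ = p`. -/
theorem no_clamped_laminated_solution_of_both_equations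
    (a b : ℝ) (hb : b ≠ 0)
    (p : ℝ → ℝ) (hp : ContinuousOn p (Set.Icc (0 : ℝ) 1)) :
    ¬ ∃ w : ℝ → ℝ, ContDiffOn ℝ 4 w (Set.Icc (0 : ℝ) 1) ∧
        (0 < ∫ x in (0:ℝ)..1, (w x) ^ 2) ∧
        w 0 = 0 ∧ w 1 = 0 ∧ D 1 w 0 = 0 ∧ D 1 w 1 = 0 ∧
        (∀ x ∈ Set.Icc (0 : ℝ) 1,
          a * D 4 w x - b * (2 * kappa w * D 2 w x - (kappa w) ^ 2 * w x) = p x) ∧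
        (∀ x ∈ Set.Icc (0 : ℝ) 1, (a - b) * D 4 w x = p x) :=
  no_clamped_laminated_solution_of_both_equations_general a b hb p
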